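/- arXiv:2506.04656 — 2 statements merged into one kernel-verified Lean document; each statement's English description precedes it below -/
import Mathlib

section
/- Let η be a nonzero measure on ℝ₊² \ {0} that is homogeneous of order -α for some α > 0 with η({(x,y) : x + y > 1}) = 1. Under the L₁-polar transformation T(x,y) = (x+y, x/(x+y)), the pushforward of η factors as a product: T_*η = ν_α × S, where ν_α(x,∞) = x^{-α} on (0,∞) and S is a probability measure on [0,1]. -/
open MeasureTheory Set
open scoped ENNReal

private lemma polar_aux_rpow {α x u : ℝ} (hα : 0 < α) (hx : 0 < x) (hu : 0 < u) :
    x < u ^ (-α⁻¹) ↔ u < x ^ (-α) := by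
  have hxa : (0:ℝ) < x ^ (-α) := Real.rpow_pos_of_pos hx _
  have hz : (-α⁻¹ : ℝ) < 0 := neg_lt_zero.mpr (inv_pos.mpr hα)
  have hmul : (-α) * (-α⁻¹) = 1 := by field_simp
  have key : (x ^ (-α)) ^ (-α⁻¹) = x := by
    rw [← Real.rpow_mul hx.le, hmul, Real.rpow_one]
  nth_rewrite 1 [← key]
  exact Real.rpow_lt_rpow_iff_of_neg hxa hu hz

private lemma polar_aux_ext (μ₁ μ₂ : Measure ℝ) (h1 : μ₁ (Iic 0) = 0) (h2 : μ₂ (Iic 0) = 0)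
    (h : ∀ ε > (0:ℝ), μ₁.restrict (Ioi ε) = μ₂.restrict (Ioi ε)) : μ₁ = μ₂ := by
  ext A hA
  have key : ∀ μ : Measure ℝ, μ (Iic 0) = 0 →
      μ A = ⨆ n : ℕ, μ (A ∩ Ioi ((n + 1 : ℝ)⁻¹)) := by
    intro μ h0
    have hU : A ∩ Ioi 0 = ⋃ n : ℕ, A ∩ Ioi ((n + 1 : ℝ)⁻¹) := by
      ext x
      simp only [mem_inter_iff, mem_Ioi, mem_iUnion]
      constructor
      · rintro ⟨hxA, hx⟩
        obtain ⟨n, hn⟩ := exists_nat_gt x⁻¹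
        refine ⟨n, hxA, ?_⟩
        have hxn : x⁻¹ < (n : ℝ) + 1 := hn.trans (by linarith)
        calc ((n:ℝ) + 1)⁻¹ < (x⁻¹)⁻¹ := by
              apply inv_strictAnti₀ (inv_pos.mpr hx) hxn
          _ = x := inv_inv x
      · rintro ⟨n, hxA, hx⟩
        exact ⟨hxA, lt_trans (by positivity) hx⟩
    have hmono : Monotone fun n : ℕ => A ∩ Ioi ((n + 1 : ℝ)⁻¹) := by
      intro m n hmn
      apply inter_subset_inter_right
      apply Ioi_subset_Ioi
      apply inv_anti₀ (by positivity)
      have : (m : ℝ) ≤ n := Nat.cast_le.mpr hmn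
      linarith
    have h0' : μ A = μ (A ∩ Ioi 0) := by
      apply le_antisymm
      · calc μ A ≤ μ ((A ∩ Ioi 0) ∪ Iic 0) := by
              apply measure_mono
              intro x hx
              by_cases hx0 : 0 < x
              · exact Or.inl ⟨hx, hx0⟩
              · exact Or.inr (not_lt.mp hx0)
          _ ≤ μ (A ∩ Ioi 0) + μ (Iic 0) := measure_union_le _ _
          _ = μ (A ∩ Ioi 0) := by rw [h0, add_zero]
      · exact measure_mono inter_subset_left
    rw [h0', hU]
    exact Directed.measure_iUnion hmono.directed_le
  rw [key μ₁ h1, key μ₂ h2]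
  congr 1
  ext n
  have hε : (0:ℝ) < ((n : ℝ) + 1)⁻¹ := by positivity
  calc μ₁ (A ∩ Ioi ((n + 1 : ℝ)⁻¹)) = μ₁.restrict (Ioi ((n + 1 : ℝ)⁻¹)) A :=
        (Measure.restrict_apply hA).symm
    _ = μ₂.restrict (Ioi ((n + 1 : ℝ)⁻¹)) A := by rw [h _ hε]
    _ = μ₂ (A ∩ Ioi ((n + 1 : ℝ)⁻¹)) := Measure.restrict_apply hA

/-- Polar factorization of a homogeneous limit measure: if `η` is a nonzero
`-α`-homogeneous measure on `ℝ₊² \ {0}` with `η{x+y>1} = 1`, then under the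
`L₁`-polar transform `T(x,y) = (x+y, x/(x+y))` it factors as `ν_α × S` with
`ν_α(x,∞) = x^{-α}` and `S` a probability (angular) measure on `[0,1]`,
given by `S(Λ) = η{(x,y) : x+y > 1, x/(x+y) ∈ Λ}`. -/
theorem polar_factorization
    (α : ℝ) (hα : 0 < α)
    (η : Measure (ℝ × ℝ)) (hηne : η ≠ 0)
    (hsupp : η {p : ℝ × ℝ | ¬(0 ≤ p.1 ∧ 0 ≤ p.2 ∧ p ≠ (0, 0))} = 0)
    (hhom : ∀ c > (0:ℝ), ∀ A : Set (ℝ × ℝ), MeasurableSet A →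
      η ((fun p => (c * p.1, c * p.2)) '' A) = ENNReal.ofReal (c ^ (-α)) * η A)
    (hone : η {p : ℝ × ℝ | 1 < p.1 + p.2} = 1) :
    ∃ ν S : Measure ℝ,
      (∀ x > (0:ℝ), ν (Set.Ioi x) = ENNReal.ofReal (x ^ (-α))) ∧
      ν (Set.Iic 0) = 0 ∧
      IsProbabilityMeasure S ∧ S (Set.Icc 0 1) = 1 ∧
      (∀ Λ : Set ℝ, MeasurableSet Λ →
        S Λ = η {p : ℝ × ℝ | 1 < p.1 + p.2 ∧ p.1 / (p.1 + p.2) ∈ Λ}) ∧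
      Measure.map (fun p : ℝ × ℝ => (p.1 + p.2, p.1 / (p.1 + p.2))) η = ν.prod S := by
  classical
  have msum : Measurable fun p : ℝ × ℝ => p.1 + p.2 := measurable_fst.add measurable_snd
  have mrat : Measurable fun p : ℝ × ℝ => p.1 / (p.1 + p.2) := measurable_fst.div msum
  have mT : Measurable fun p : ℝ × ℝ => (p.1 + p.2, p.1 / (p.1 + p.2)) := msum.prodMk mrat
  -- the bad (null) set
  set Bad : Set (ℝ × ℝ) := {p : ℝ × ℝ | ¬(0 ≤ p.1 ∧ 0 ≤ p.2 ∧ p ≠ (0, 0))} with hBad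
  have hgood_sum : ∀ p : ℝ × ℝ, p ∉ Bad → 0 < p.1 + p.2 := by
    intro p hp
    simp only [hBad, mem_setOf_eq, not_not] at hp
    obtain ⟨hx, hy, hne⟩ := hp
    rcases (add_nonneg hx hy).lt_or_eq with h | h
    · exact h
    · exfalso
      apply hne
      have hx0 : p.1 = 0 := by linarith
      have hy0 : p.2 = 0 := by linarith
      exact Prod.ext_iff.mpr ⟨hx0, hy0⟩
  -- the radial measure ν
  set f : ℝ → ℝ := fun u => u ^ (-α⁻¹) with hf
  have mf : Measurable f := by
    apply measurable_of_continuousOn_compl_singleton (0 : ℝ)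
    intro x hx
    exact (Real.continuousAt_rpow_const x _ (Or.inl hx)).continuousWithinAt
  set ν : Measure ℝ := Measure.map f (volume.restrict (Ioi 0)) with hν
  have hνIoi : ∀ x > (0:ℝ), ν (Ioi x) = ENNReal.ofReal (x ^ (-α)) := by
    intro x hx
    rw [hν, Measure.map_apply mf measurableSet_Ioi,
      Measure.restrict_apply (mf measurableSet_Ioi)]
    have : f ⁻¹' Ioi x ∩ Ioi 0 = Ioo 0 (x ^ (-α)) := by
      ext u
      simp only [hf, mem_inter_iff, mem_preimage, mem_Ioi, mem_Ioo]
      constructor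
      · rintro ⟨h1, h2⟩
        exact ⟨h2, (polar_aux_rpow hα hx h2).mp h1⟩
      · rintro ⟨h1, h2⟩
        exact ⟨(polar_aux_rpow hα hx h1).mpr h2, h1⟩
    rw [this, Real.volume_Ioo, sub_zero]
  have hνIic : ν (Iic 0) = 0 := by
    rw [hν, Measure.map_apply mf measurableSet_Iic,
      Measure.restrict_apply (mf measurableSet_Iic)]
    have : f ⁻¹' Iic 0 ∩ Ioi 0 = ∅ := by
      ext u
      simp only [hf, mem_inter_iff, mem_preimage, mem_Iic, mem_Ioi, mem_empty_iff_false,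
        iff_false, not_and]
      intro h1 h2
      exact absurd h1 (not_le.mpr (Real.rpow_pos_of_pos h2 _))
    rw [this]
    simp
  haveI hνσ : SigmaFinite ν := by
    refine ⟨⟨⟨fun n => Iic 0 ∪ Ioi ((n + 1 : ℝ)⁻¹), fun _ => trivial, ?_, ?_⟩⟩⟩
    · intro n
      calc ν (Iic 0 ∪ Ioi ((n + 1 : ℝ)⁻¹)) ≤ ν (Iic 0) + ν (Ioi ((n + 1 : ℝ)⁻¹)) :=
            measure_union_le _ _
        _ = ENNReal.ofReal (((n + 1 : ℝ)⁻¹) ^ (-α)) := by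
            rw [hνIic, hνIoi _ (by positivity), zero_add]
        _ < ⊤ := ENNReal.ofReal_lt_top
    · ext x
      simp only [mem_iUnion, mem_univ, iff_true, mem_union, mem_Iic, mem_Ioi]
      rcases le_or_gt x 0 with h | h
      · exact ⟨0, Or.inl h⟩
      · obtain ⟨n, hn⟩ := exists_nat_gt x⁻¹
        refine ⟨n, Or.inr ?_⟩
        have hxn : x⁻¹ < (n : ℝ) + 1 := hn.trans (by linarith)
        calc ((n:ℝ) + 1)⁻¹ < (x⁻¹)⁻¹ := inv_strictAnti₀ (inv_pos.mpr h) hxn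
          _ = x := inv_inv x
  -- the angular measure S
  set U : Set (ℝ × ℝ) := {p : ℝ × ℝ | 1 < p.1 + p.2} with hU
  have mU : MeasurableSet U := measurableSet_lt measurable_const msum
  set S : Measure ℝ := Measure.map (fun p : ℝ × ℝ => p.1 / (p.1 + p.2)) (η.restrict U) with hS
  have hSapp : ∀ Λ : Set ℝ, MeasurableSet Λ →
      S Λ = η {p : ℝ × ℝ | 1 < p.1 + p.2 ∧ p.1 / (p.1 + p.2) ∈ Λ} := by
    intro Λ hΛ
    rw [hS, Measure.map_apply mrat hΛ, Measure.restrict_apply (mrat hΛ)]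
    congr 1
    ext p
    simp only [mem_inter_iff, mem_preimage, hU, mem_setOf_eq]
    tauto
  have hSuniv : S univ = 1 := by
    rw [hS, Measure.map_apply mrat MeasurableSet.univ, preimage_univ,
      Measure.restrict_apply_univ]
    exact hone
  haveI hSprob : IsProbabilityMeasure S := ⟨hSuniv⟩
  have hSIcc : S (Icc 0 1) = 1 := by
    rw [hSapp _ measurableSet_Icc]
    apply le_antisymm
    · rw [← hone]
      exact measure_mono fun p hp => hp.1
    · have hsub : U ⊆ {p : ℝ × ℝ | 1 < p.1 + p.2 ∧ p.1 / (p.1 + p.2) ∈ Icc 0 1} ∪ Bad := by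
        intro p hp
        by_cases hb : p ∈ Bad
        · exact Or.inr hb
        · left
          have hps : 0 < p.1 + p.2 := hgood_sum p hb
          simp only [hBad, mem_setOf_eq, not_not] at hb
          have hp1 : 1 < p.1 + p.2 := hp
          refine ⟨hp1, div_nonneg hb.1 hps.le, ?_⟩
          rw [div_le_one hps]
          linarith [hb.2.1]
      calc (1 : ℝ≥0∞) = η U := hone.symm
        _ ≤ η ({p : ℝ × ℝ | 1 < p.1 + p.2 ∧ p.1 / (p.1 + p.2) ∈ Icc 0 1} ∪ Bad) :=
            measure_mono hsub
        _ ≤ η {p : ℝ × ℝ | 1 < p.1 + p.2 ∧ p.1 / (p.1 + p.2) ∈ Icc 0 1} + η Bad :=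
            measure_union_le _ _
        _ = η {p : ℝ × ℝ | 1 < p.1 + p.2 ∧ p.1 / (p.1 + p.2) ∈ Icc 0 1} := by
            rw [hsupp, add_zero]
  -- homogeneity on polar rays
  have hkey : ∀ r > (0:ℝ), ∀ Λ : Set ℝ, MeasurableSet Λ →
      η {p : ℝ × ℝ | r < p.1 + p.2 ∧ p.1 / (p.1 + p.2) ∈ Λ} =
        ENNReal.ofReal (r ^ (-α)) * S Λ := by
    intro r hr Λ hΛ
    have hA : MeasurableSet {p : ℝ × ℝ | 1 < p.1 + p.2 ∧ p.1 / (p.1 + p.2) ∈ Λ} := by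
      exact (measurableSet_lt measurable_const msum).inter (mrat hΛ)
    have himg : (fun p : ℝ × ℝ => (r * p.1, r * p.2)) ''
          {p : ℝ × ℝ | 1 < p.1 + p.2 ∧ p.1 / (p.1 + p.2) ∈ Λ} =
        {p : ℝ × ℝ | r < p.1 + p.2 ∧ p.1 / (p.1 + p.2) ∈ Λ} := by
      ext q
      constructor
      · rintro ⟨p, ⟨h1, h2⟩, rfl⟩
        constructor
        · show r < r * p.1 + r * p.2
          nlinarith
        · show (r * p.1) / (r * p.1 + r * p.2) ∈ Λ
          have : r * p.1 + r * p.2 = r * (p.1 + p.2) := by ring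
          rw [this, mul_div_mul_left _ _ hr.ne']
          exact h2
      · rintro ⟨h1, h2⟩
        have hsq : q.1 + q.2 ≠ 0 := by nlinarith
        refine ⟨(q.1 / r, q.2 / r), ⟨?_, ?_⟩, ?_⟩
        · show 1 < q.1 / r + q.2 / r
          rw [← add_div]
          exact (one_lt_div hr).mpr h1
        · show (q.1 / r) / (q.1 / r + q.2 / r) ∈ Λ
          have heq : (q.1 / r) / (q.1 / r + q.2 / r) = q.1 / (q.1 + q.2) := by
            rw [← add_div]
            field_simp
          rw [heq]
          exact h2
        · show (r * (q.1 / r), r * (q.2 / r)) = q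
          have e1 : r * (q.1 / r) = q.1 := by field_simp
          have e2 : r * (q.2 / r) = q.2 := by field_simp
          rw [e1, e2]
      
    have := hhom r hr _ hA
    rw [himg] at this
    rw [this, hSapp _ hΛ]
  -- the main product identity on rectangles
  have main : ∀ B : Set ℝ, MeasurableSet B → ∀ A : Set ℝ, MeasurableSet A →
      η {p : ℝ × ℝ | p.1 + p.2 ∈ A ∧ p.1 / (p.1 + p.2) ∈ B} = ν A * S B := by
    intro B hB
    set ρ : Measure ℝ :=
      Measure.map (fun p : ℝ × ℝ => p.1 + p.2)
        (η.restrict {p : ℝ × ℝ | p.1 / (p.1 + p.2) ∈ B}) with hρ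
    have hρapp : ∀ A : Set ℝ, MeasurableSet A →
        ρ A = η {p : ℝ × ℝ | p.1 + p.2 ∈ A ∧ p.1 / (p.1 + p.2) ∈ B} := by
      intro A hA
      rw [hρ, Measure.map_apply msum hA, Measure.restrict_apply (msum hA)]
      congr 1
    have hρIoi : ∀ r > (0:ℝ), ρ (Ioi r) = ENNReal.ofReal (r ^ (-α)) * S B := by
      intro r hr
      rw [hρapp _ measurableSet_Ioi]
      have : {p : ℝ × ℝ | p.1 + p.2 ∈ Ioi r ∧ p.1 / (p.1 + p.2) ∈ B} =
          {p : ℝ × ℝ | r < p.1 + p.2 ∧ p.1 / (p.1 + p.2) ∈ B} := rfl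
      rw [this, hkey r hr B hB]
    have hρIic : ρ (Iic 0) = 0 := by
      rw [hρapp _ measurableSet_Iic]
      refine measure_mono_null ?_ hsupp
      intro p hp
      by_contra hb
      have := hgood_sum p hb
      have : p.1 + p.2 ≤ 0 := hp.1
      linarith [hgood_sum p hb]
    have heq : ρ = S B • ν := by
      apply polar_aux_ext
      · exact hρIic
      · simp [Measure.smul_apply, hνIic]
      · intro ε hε
        haveI hfinρ : IsFiniteMeasure (ρ.restrict (Ioi ε)) := by
          constructor
          rw [Measure.restrict_apply_univ, hρIoi ε hε]
          exact ENNReal.mul_lt_top ENNReal.ofReal_lt_top (measure_lt_top S B)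
        refine ext_of_generate_finite (range Ioi)
          ((BorelSpace.measurable_eq).trans (borel_eq_generateFrom_Ioi ℝ)) isPiSystem_Ioi ?_ ?_
        · rintro s ⟨a, rfl⟩
          rw [Measure.restrict_apply measurableSet_Ioi,
            Measure.restrict_apply measurableSet_Ioi, Ioi_inter_Ioi]
          have hm : (0:ℝ) < a ⊔ ε := lt_sup_of_lt_right hε
          rw [hρIoi _ hm, Measure.smul_apply, hνIoi _ hm, smul_eq_mul, mul_comm]
        · rw [Measure.restrict_apply_univ, Measure.restrict_apply_univ, hρIoi ε hε,
            Measure.smul_apply, hνIoi ε hε, smul_eq_mul, mul_comm]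
    intro A hA
    rw [← hρapp A hA, heq, Measure.smul_apply, smul_eq_mul, mul_comm]
  -- conclude
  refine ⟨ν, S, hνIoi, hνIic, hSprob, hSIcc, hSapp, ?_⟩
  refine (Measure.prod_eq ?_).symm
  intro s t hs ht
  rw [Measure.map_apply mT (hs.prod ht)]
  have : (fun p : ℝ × ℝ => (p.1 + p.2, p.1 / (p.1 + p.2))) ⁻¹' (s ×ˢ t) =
      {p : ℝ × ℝ | p.1 + p.2 ∈ s ∧ p.1 / (p.1 + p.2) ∈ t} := rfl
  rw [this, main t ht s hs]
end

section
/- Suppose t·P[Z/b(t) ∈ ·] → η vaguely on ℝ₊² \ {0} with η homogeneous of order -α and angular measure S satisfying S([a,b]) = 1 for some 0 < a ≤ b ≤ 1. Then t·P[d(Z, C_{a,b}) > b(t)·ε] → 0 as t → ∞ for every ε > 0; i.e., the normalized distance d(Z, C_{a,b})/b(t) is negligible for extreme observations. -/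
open MeasureTheory Filter
open scoped ENNReal Topology

/-- If the limit measure `η` has angular measure `S` with `S([a,b]) = 1`, then the
normalized cone distance is negligible for extremes:
`t·P[d(Z, C_{a,b}) > b(t)·ε] → 0` for every `ε > 0`. -/
theorem cone_distance_negligible
    {Ω : Type*} [MeasurableSpace Ω] (μ : Measure Ω) [IsProbabilityMeasure μ]
    (α a b : ℝ) (hα : 0 < α) (ha : 0 < a) (hab : a ≤ b) (hb1 : b ≤ 1)
    (Z : Ω → ℝ × ℝ) (hZmeas : Measurable Z) (hZpos : ∀ ω, 0 ≤ (Z ω).1 ∧ 0 ≤ (Z ω).2)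
    (bfun : ℝ → ℝ) (hbpos : ∀ t, 0 < bfun t) (hbinf : Tendsto bfun atTop atTop)
    (hbrv : ∀ x > (0:ℝ), Tendsto (fun t => bfun (t * x) / bfun t) atTop (𝓝 (x ^ (1/α))))
    (η : Measure (ℝ × ℝ)) (hηne : η ≠ 0)
    (hhom : ∀ c > (0:ℝ), ∀ A : Set (ℝ × ℝ), MeasurableSet A →
      η ((fun p => (c * p.1, c * p.2)) '' A) = ENNReal.ofReal (c ^ (-α)) * η A)
    (hconv : ∀ A : Set (ℝ × ℝ), MeasurableSet A →
      (∃ δ > (0:ℝ), ∀ p ∈ A, δ ≤ p.1 + p.2) → η (frontier A) = 0 → η A ≠ ∞ →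
      Tendsto (fun t => t * (μ {ω | ((Z ω).1 / bfun t, (Z ω).2 / bfun t) ∈ A}).toReal)
        atTop (𝓝 (η A).toReal))
    (ν S : Measure ℝ) [IsProbabilityMeasure S]
    (hν : ∀ x > (0:ℝ), ν (Set.Ioi x) = ENNReal.ofReal (x ^ (-α)))
    (hmap : Measure.map (fun p : ℝ × ℝ => (p.1 + p.2, p.1 / (p.1 + p.2))) η = ν.prod S)
    (hSab : S (Set.Icc a b) = 1) :
    ∀ ε > (0:ℝ),
      Tendsto (fun t => t * (μ {ω |
          ε * bfun t < max ((b⁻¹ - 1) * (Z ω).1 - (Z ω).2) 0 +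
            max ((Z ω).2 - (a⁻¹ - 1) * (Z ω).1) 0}).toReal) atTop (𝓝 0) := by
  intro ε hε
  have hb : 0 < b := lt_of_lt_of_le ha hab
  have hbinv : (1:ℝ) ≤ b⁻¹ := (one_le_inv₀ hb).mpr hb1
  have hainv : (1:ℝ) ≤ a⁻¹ := (one_le_inv₀ ha).mpr (le_trans hab hb1)
  set d : ℝ × ℝ → ℝ := fun p =>
    max ((b⁻¹ - 1) * p.1 - p.2) 0 + max (p.2 - (a⁻¹ - 1) * p.1) 0 with hd
  have hdcont : Continuous d := by
    apply Continuous.add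
    · exact (continuous_const.mul continuous_fst |>.sub continuous_snd).max continuous_const
    · exact (continuous_snd.sub (continuous_const.mul continuous_fst)).max continuous_const
  set A : Set (ℝ × ℝ) := {p | 0 ≤ p.1 ∧ 0 ≤ p.2 ∧ ε < d p} with hA
  have hAmeas : MeasurableSet A := by
    apply MeasurableSet.inter (measurableSet_le measurable_const measurable_fst)
    exact MeasurableSet.inter (measurableSet_le measurable_const measurable_snd)
      (measurableSet_lt measurable_const hdcont.measurable)
  -- the "bad cone complement" set has η-measure zero
  set G : Set (ℝ × ℝ) := {p | 0 < p.1 + p.2 ∧ p.1 / (p.1 + p.2) ∉ Set.Icc a b} with hG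
  have hTmeas : Measurable (fun p : ℝ × ℝ => (p.1 + p.2, p.1 / (p.1 + p.2))) :=
    (measurable_fst.add measurable_snd).prodMk
      (measurable_fst.div (measurable_fst.add measurable_snd))
  have hGzero : η G = 0 := by
    have hE : MeasurableSet (Set.Ioi (0:ℝ) ×ˢ (Set.Icc a b)ᶜ) :=
      measurableSet_Ioi.prod measurableSet_Icc.compl
    have : G = (fun p : ℝ × ℝ => (p.1 + p.2, p.1 / (p.1 + p.2))) ⁻¹'
        (Set.Ioi (0:ℝ) ×ˢ (Set.Icc a b)ᶜ) := by
      ext p; simp [hG, Set.mem_prod]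
    rw [this, ← Measure.map_apply hTmeas hE, hmap, Measure.prod_prod]
    have hScompl : S (Set.Icc a b)ᶜ = 0 := by
      rw [measure_compl measurableSet_Icc (measure_ne_top S _), hSab, measure_univ, tsub_self]
    rw [hScompl, mul_zero]
  -- closure of A is inside G
  have hclos : closure A ⊆ G := by
    have hA' : closure A ⊆ {p : ℝ × ℝ | 0 ≤ p.1 ∧ 0 ≤ p.2 ∧ ε ≤ d p} := by
      apply closure_minimal
      · intro p hp; exact ⟨hp.1, hp.2.1, hp.2.2.le⟩
      · exact (isClosed_le continuous_const continuous_fst).inter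
          ((isClosed_le continuous_const continuous_snd).inter
            (isClosed_le continuous_const hdcont))
    intro p hp
    obtain ⟨hx, hy, hεd⟩ := hA' hp
    have hdpos : 0 < d p := lt_of_lt_of_le hε hεd
    have hcase : 0 < (b⁻¹ - 1) * p.1 - p.2 ∨ 0 < p.2 - (a⁻¹ - 1) * p.1 := by
      by_contra h
      push_neg at h
      have : d p = 0 := by
        simp [hd, max_eq_right h.1, max_eq_right h.2]
      linarith
    rcases hcase with h | h
    · have hx0 : 0 < p.1 := by
        by_contra hx0
        push_neg at hx0
        have hx0' : p.1 = 0 := le_antisymm hx0 hx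
        rw [hx0'] at h; simp at h; linarith
      have hr : 0 < p.1 + p.2 := by linarith
      refine ⟨hr, ?_⟩
      have hbw : b < p.1 / (p.1 + p.2) := by
        rw [lt_div_iff₀ hr]
        have hb' : b⁻¹ * p.1 > p.1 + p.2 := by nlinarith
        nlinarith [mul_lt_mul_of_pos_left hb' hb, mul_inv_cancel₀ (ne_of_gt hb)]
      intro hw
      exact absurd hw.2 (not_le.mpr hbw)
    · have hy0 : 0 < p.2 := by nlinarith
      have hr : 0 < p.1 + p.2 := by linarith
      refine ⟨hr, ?_⟩
      have haw : p.1 / (p.1 + p.2) < a := by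
        rw [div_lt_iff₀ hr]
        have ha' : a⁻¹ * p.1 < p.1 + p.2 := by nlinarith
        nlinarith [mul_lt_mul_of_pos_left ha' ha, mul_inv_cancel₀ (ne_of_gt ha)]
      intro hw
      exact absurd hw.1 (not_le.mpr haw)
  have hηA : η A = 0 :=
    measure_mono_null (subset_trans subset_closure hclos) hGzero
  have hfr : η (frontier A) = 0 :=
    measure_mono_null (subset_trans frontier_subset_closure hclos) hGzero
  have hδ : ∃ δ > (0:ℝ), ∀ p ∈ A, δ ≤ p.1 + p.2 := by
    refine ⟨ε * b, mul_pos hε hb, ?_⟩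
    intro p hp
    obtain ⟨hx, hy, hεd⟩ := hp
    have h1 : d p ≤ b⁻¹ * (p.1 + p.2) := by
      have h2 : max ((b⁻¹ - 1) * p.1 - p.2) 0 ≤ (b⁻¹ - 1) * p.1 := by
        apply max_le _ (by nlinarith)
        nlinarith
      have h3 : max (p.2 - (a⁻¹ - 1) * p.1) 0 ≤ p.2 := by
        apply max_le _ hy
        nlinarith
      simp only [hd]
      nlinarith
    have : ε < b⁻¹ * (p.1 + p.2) := lt_of_lt_of_le hεd h1
    nlinarith [mul_lt_mul_of_pos_left this hb, mul_inv_cancel₀ (ne_of_gt hb)]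
  have hmain := hconv A hAmeas hδ hfr (by rw [hηA]; exact ENNReal.zero_ne_top)
  rw [hηA, ENNReal.toReal_zero] at hmain
  -- identify the events
  have hset : ∀ t, {ω | ε * bfun t < max ((b⁻¹ - 1) * (Z ω).1 - (Z ω).2) 0 +
      max ((Z ω).2 - (a⁻¹ - 1) * (Z ω).1) 0} =
      {ω | ((Z ω).1 / bfun t, (Z ω).2 / bfun t) ∈ A} := by
    intro t
    ext ω
    have hc : 0 < bfun t := hbpos t
    have hcne : bfun t ≠ 0 := ne_of_gt hc
    obtain ⟨hx, hy⟩ := hZpos ω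
    simp only [Set.mem_setOf_eq, hA, hd]
    constructor
    · intro h
      refine ⟨div_nonneg hx hc.le, div_nonneg hy hc.le, ?_⟩
      rw [show (b⁻¹ - 1) * ((Z ω).1 / bfun t) - (Z ω).2 / bfun t
          = ((b⁻¹ - 1) * (Z ω).1 - (Z ω).2) / bfun t by ring,
        show (Z ω).2 / bfun t - (a⁻¹ - 1) * ((Z ω).1 / bfun t)
          = ((Z ω).2 - (a⁻¹ - 1) * (Z ω).1) / bfun t by ring,
        show (0:ℝ) = 0 / bfun t by simp,
        max_div_div_right hc.le, max_div_div_right hc.le,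
        ← add_div, lt_div_iff₀ hc]
      linarith [h]
    · rintro ⟨-, -, h⟩
      rw [show (b⁻¹ - 1) * ((Z ω).1 / bfun t) - (Z ω).2 / bfun t
          = ((b⁻¹ - 1) * (Z ω).1 - (Z ω).2) / bfun t by ring,
        show (Z ω).2 / bfun t - (a⁻¹ - 1) * ((Z ω).1 / bfun t)
          = ((Z ω).2 - (a⁻¹ - 1) * (Z ω).1) / bfun t by ring,
        show (0:ℝ) = 0 / bfun t by simp,
        max_div_div_right hc.le, max_div_div_right hc.le,
        ← add_div, lt_div_iff₀ hc] at h
      linarith [h]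
  simpa only [hset] using hmain
end
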